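/- (Asymptotic Trace Lemma) Let α = (a_1,…,a_k) ∈ F_2^k and let β = (a_{t+1},…,a_{t+r}) ∈ F_2^r be a contiguous subsequence with t + r ≤ k, such that β is neither the all-zero vector nor the all-one vector of length r. Then f_α(n) = O(f_β(n)); that is, there is a constant C > 0 such that f_α(n) ≤ C·f_β(n) for all sufficiently large n. -/

import Mathlib

open Filter

/-- A family `F` of subsets of `[n]` (modeled as `Fin n`) is `α`-intersecting modulo 2 for a
vector `α ∈ F_2^k` if for each `ℓ ∈ [k]`, any `ℓ` pairwise distinct members of `F`
have an intersection of cardinality congruent to `a_ℓ` modulo 2.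
Here `α ⟨ℓ-1,_⟩` denotes the coordinate `a_ℓ` (0-based indexing of a 1-based vector). -/
def IsIntersecting (k n : ℕ) (α : Fin k → ZMod 2) (F : Finset (Finset (Fin n))) : Prop :=
  ∀ (ℓ : Fin k) (S : Finset (Finset (Fin n))), S ⊆ F → S.card = ℓ.1 + 1 →
    ((S.inf id).card : ZMod 2) = α ℓ

/-- `fMax k n α` is the maximum size of an `α`-intersecting (mod 2) family of subsets of `[n]`. -/
noncomputable def fMax (k n : ℕ) (α : Fin k → ZMod 2) : ℕ :=
  sSup {m | ∃ F : Finset (Finset (Fin n)), IsIntersecting k n α F ∧ F.card = m}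

/-!
Fix `T ⊆ F` with `|T| = t` and put `X = ⋂ T`. For `G₁, …, G_ℓ ∈ F \ T` the traces `Gᵢ ∩ X`
intersect in `⋂ (T ∪ {G₁, …, G_ℓ})`, whose parity is `a_{t+ℓ} = b_ℓ`; so the traces form a
`β`-intersecting family once the trace map is injective on `F \ T`. It is, because `β` has two
adjacent coordinates `b_j ≠ b_{j+1}`: if `G ∩ X = G' ∩ X` with `G ≠ G'`, then adding `G'` to
`T ∪ D ∪ {G}` (any `j` further members `D`) does not change the intersection, forcing
`a_{t+j} = a_{t+j+1}`. Hence `|F| ≤ t + r + f_β(n)`, and `f_β(n) ≥ 1` for `n ≥ 1`.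
-/

lemma exists_succ_ne_of_ne {γ : Type*} {r : ℕ} (f : Fin r → γ) {i i' : Fin r}
    (h : f i ≠ f i') : ∃ j : ℕ, ∃ hj : j + 1 < r, f ⟨j, by omega⟩ ≠ f ⟨j + 1, hj⟩ := by
  by_contra! hc
  have hconst : ∀ m (hm : m < r), f ⟨m, hm⟩ = f ⟨0, by omega⟩ := by
    intro m hm
    induction m with
    | zero => rfl
    | succ m ih => rw [← hc m hm, ih]
  exact h (by rw [hconst i i.2, hconst i' i'.2])

lemma ZMod.exists_apply_ne_of_ne_zero_of_ne_one {ι : Type*} {β : ι → ZMod 2} (h0 : β ≠ fun _ => 0)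
    (h1 : β ≠ fun _ => 1) : ∃ i i', β i ≠ β i' := by
  obtain ⟨i, hi⟩ := Function.ne_iff.mp h0
  obtain ⟨i', hi'⟩ := Function.ne_iff.mp h1
  refine ⟨i, i', fun h => ?_⟩
  rcases (by decide : ∀ x : ZMod 2, x = 0 ∨ x = 1) (β i) with h' | h' <;> simp_all

lemma Finset.inf_image_inf_right {α β : Type*} [DecidableEq α] [SemilatticeInf α] [OrderTop α]
    {S : Finset β} (hS : S.Nonempty) (g : β → α) (x : α) :
    (S.image (g · ⊓ x)).inf id = S.inf g ⊓ x := by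
  rw [Finset.inf_image, Function.id_comp, show (g · ⊓ x) = g ⊓ fun _ => x from rfl,
    Finset.inf_inf, Finset.inf_const hS]

section Intersecting

variable {k n : ℕ} {α : Fin k → ZMod 2} {F : Finset (Finset (Fin n))}

lemma isIntersecting_empty : IsIntersecting k n α ∅ := by
  intro ℓ S hS hcard
  simp [Finset.subset_empty.mp hS] at hcard

lemma isIntersecting_singleton {s : Finset (Fin n)}
    (hs : ∀ hk : 0 < k, (s.card : ZMod 2) = α ⟨0, hk⟩) : IsIntersecting k n α {s} := by
  intro ℓ S hS hcard
  obtain rfl | rfl := Finset.subset_singleton_iff.mp hS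
  · simp at hcard
  · rw [show ℓ = ⟨0, ℓ.pos⟩ from Fin.ext (by simpa using hcard.symm)]
    simpa using hs ℓ.pos

lemma IsIntersecting.eq_succ_of_inf_le (hF : IsIntersecting k n α F)
    {S : Finset (Finset (Fin n))} {G : Finset (Fin n)} (hS : S ⊆ F) (hG : G ∈ F) (hGS : G ∉ S)
    (hle : S.inf id ≤ G) {i : ℕ} (hi : i + 1 < k) (hcard : S.card = i + 1) :
    α ⟨i, by omega⟩ = α ⟨i + 1, hi⟩ := by
  have hinf : (insert G S).inf id = S.inf id := by
    rw [Finset.inf_insert, id, inf_eq_right.mpr hle]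
  rw [← hF ⟨i, by omega⟩ S hS hcard,
    ← hF ⟨i + 1, hi⟩ (insert G S) (Finset.insert_subset hG hS)
      (by rw [Finset.card_insert_of_notMem hGS, hcard]), hinf]

lemma IsIntersecting.injOn_inf_inf (hF : IsIntersecting k n α F)
    {T : Finset (Finset (Fin n))} (hT : T ⊆ F) {j : ℕ} (hj : T.card + j + 1 < k)
    (hFcard : T.card + j + 2 ≤ F.card) (hα : α ⟨T.card + j, by omega⟩ ≠ α ⟨T.card + j + 1, hj⟩) :
    Set.InjOn (· ⊓ T.inf id) ↑(F \ T) := by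
  intro G hG G' hG' htrace
  simp only [Finset.coe_sdiff, Set.mem_sdiff, Finset.mem_coe] at hG hG'
  by_contra hne
  have hD : j ≤ (F \ insert G (insert G' T)).card := by
    have := Finset.le_card_sdiff (insert G (insert G' T)) F
    have := Finset.card_insert_le G (insert G' T)
    have := Finset.card_insert_le G' T
    omega
  obtain ⟨D, hDsub, hDcard⟩ := Finset.exists_subset_card_eq hD
  have hDF : D ⊆ F := hDsub.trans Finset.sdiff_subset
  have hDout : ∀ H ∈ D, H ≠ G ∧ H ≠ G' ∧ H ∉ T := fun H hH => by
    simpa using (Finset.mem_sdiff.mp (hDsub hH)).2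
  have hGTD : G ∉ T ∪ D := by
    simpa [hG.2] using fun h => (hDout G h).1 rfl
  have hG'S : G' ∉ insert G (T ∪ D) := by
    simpa [hG'.2, Ne.symm hne] using fun h => (hDout G' h).2.1 rfl
  have hTD : Disjoint T D := Finset.disjoint_right.mpr fun H hH => (hDout H hH).2.2
  refine hα (hF.eq_succ_of_inf_le (S := insert G (T ∪ D)) (G := G')
    (Finset.insert_subset hG.1 (Finset.union_subset hT hDF)) hG'.1 hG'S ?_ hj ?_)
  · calc (insert G (T ∪ D)).inf id ≤ G ⊓ T.inf id :=
          le_inf (Finset.inf_le (Finset.mem_insert_self _ _))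
            (Finset.inf_mono (Finset.subset_union_left.trans (Finset.subset_insert _ _)))
      _ = G' ⊓ T.inf id := htrace
      _ ≤ G' := inf_le_left
  · rw [Finset.card_insert_of_notMem hGTD, Finset.card_union_of_disjoint hTD, hDcard]

lemma IsIntersecting.image_inf_inf {r : ℕ} {β : Fin r → ZMod 2} (hF : IsIntersecting k n α F)
    {T : Finset (Finset (Fin n))} (hT : T ⊆ F) (hk : T.card + r ≤ k)
    (hβ : ∀ j : Fin r, β j = α ⟨T.card + j.1, by omega⟩)
    (hinj : Set.InjOn (· ⊓ T.inf id) ↑(F \ T)) :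
    IsIntersecting r n β ((F \ T).image (· ⊓ T.inf id)) := by
  intro ℓ S hS hcard
  obtain ⟨S', hS', rfl⟩ := Finset.subset_image_iff.mp hS
  have hS'card : S'.card = ℓ.1 + 1 := by
    rwa [Finset.card_image_of_injOn (hinj.mono (Finset.coe_subset.mpr hS'))] at hcard
  have hS'T : Disjoint S' T :=
    Finset.disjoint_left.mpr fun H hH => (Finset.mem_sdiff.mp (hS' hH)).2
  have hinf : (S'.image (· ⊓ T.inf id)).inf id = (S' ∪ T).inf id := by
    rw [Finset.inf_union, ← Finset.inf_image_inf_right (Finset.card_pos.mp (by omega))]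
    rfl
  rw [hinf, hβ ℓ, hF ⟨T.card + ℓ.1, by omega⟩ (S' ∪ T)
    (Finset.union_subset (hS'.trans Finset.sdiff_subset) hT)
    (by rw [Finset.card_union_of_disjoint hS'T, hS'card]; simp only; omega)]

end Intersecting

section fMax

variable {k n : ℕ} {α : Fin k → ZMod 2}

lemma bddAbove_setOf_isIntersecting :
    BddAbove {m | ∃ F : Finset (Finset (Fin n)), IsIntersecting k n α F ∧ F.card = m} :=
  ⟨Fintype.card (Finset (Fin n)), by rintro m ⟨F, -, rfl⟩; exact Finset.card_le_univ F⟩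

lemma IsIntersecting.card_le_fMax {F : Finset (Finset (Fin n))} (hF : IsIntersecting k n α F) :
    F.card ≤ fMax k n α :=
  le_csSup bddAbove_setOf_isIntersecting ⟨F, hF, rfl⟩

lemma fMax_le {m : ℕ} (h : ∀ F, IsIntersecting k n α F → F.card ≤ m) : fMax k n α ≤ m :=
  csSup_le ⟨0, ∅, isIntersecting_empty, rfl⟩ fun _ ⟨F, hF, hm⟩ => hm ▸ h F hF

lemma one_le_fMax (hk : 0 < k) (hn : 0 < n) : 1 ≤ fMax k n α := by
  obtain ⟨s, hs⟩ : ∃ s : Finset (Fin n), (s.card : ZMod 2) = α ⟨0, hk⟩ := by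
    rcases (by decide : ∀ x : ZMod 2, x = 0 ∨ x = 1) (α ⟨0, hk⟩) with h | h
    · exact ⟨∅, by simp [h]⟩
    · exact ⟨{⟨0, hn⟩}, by simp [h]⟩
  exact (isIntersecting_singleton (α := α) fun _ => hs).card_le_fMax

lemma fMax_le_add_fMax {r t : ℕ} (htr : t + r ≤ k) {β : Fin r → ZMod 2}
    (hβ : ∀ j : Fin r, β j = α ⟨t + j.1, by omega⟩) {j : ℕ} (hj : j + 1 < r)
    (hβj : β ⟨j, by omega⟩ ≠ β ⟨j + 1, hj⟩) :
    fMax k n α ≤ t + r + fMax r n β := by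
  refine fMax_le fun F hF => ?_
  by_cases hFcard : F.card ≤ t + r
  · omega
  obtain ⟨T, hT, rfl⟩ := Finset.exists_subset_card_eq (show t ≤ F.card by omega)
  have hinj := hF.injOn_inf_inf hT (j := j) (by omega) (by omega)
    (by rwa [hβ, hβ] at hβj)
  have := (hF.image_inf_inf hT htr hβ hinj).card_le_fMax
  rw [Finset.card_image_of_injOn hinj, Finset.card_sdiff_of_subset hT] at this
  omega

end fMax

theorem stmt7 (k r t : ℕ) (htr : t + r ≤ k) (α : Fin k → ZMod 2) (β : Fin r → ZMod 2)
    (hβ : ∀ j : Fin r, β j = α ⟨t + j.1, by have := j.isLt; omega⟩)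
    (hβ0 : β ≠ fun _ => 0) (hβ1 : β ≠ fun _ => 1) :
    ∃ C : ℝ, 0 < C ∧ ∀ᶠ n : ℕ in atTop,
      (fMax k n α : ℝ) ≤ C * (fMax r n β : ℝ) := by
  obtain ⟨i, i', hii'⟩ := ZMod.exists_apply_ne_of_ne_zero_of_ne_one hβ0 hβ1
  obtain ⟨j, hj, hβj⟩ := exists_succ_ne_of_ne β hii'
  refine ⟨t + r + 1, by positivity, ?_⟩
  filter_upwards [eventually_ge_atTop 1] with n hn
  have hone : 1 ≤ fMax r n β := one_le_fMax (by omega) hn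
  have hle := fMax_le_add_fMax (n := n) htr hβ hj hβj
  have : fMax k n α ≤ (t + r + 1) * fMax r n β := by nlinarith
  exact_mod_cast this
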